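/- arXiv:1502.04928 — 9 statements merged into one kernel-verified Lean document; each statement's English description precedes it below -/
import Mathlib

section
/- If there exist diagonal positive definite matrices P, Q satisfying A^T P + P A + Q + P B Q^{-1} B^T P ≺ 0, then for every non-zero positive semi-definite 2n×2n matrix H with blocks H11, H12, H12^T, H22 (each n×n) such that every diagonal entry of H11 is at least the corresponding diagonal entry of H22, the matrix A H11 + B H12^T has at least one negative diagonal entry. -/
/-!
By the Schur complement with respect to `Q`, the Riccati inequality says that the block matrix
`M = [[-(AᵀP + PA + Q), -PB], [-BᵀP, Q]]` is positive definite, so `tr (M H) > 0` for every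
nonzero positive semidefinite `H`. For diagonal `P = diag p`, `Q = diag q` and symmetric `H11`,
`tr (M H) = -2 ∑ pᵢ (A H11 + B H12ᵀ)ᵢᵢ - ∑ qᵢ (H11 - H22)ᵢᵢ`, and the second sum is nonnegative
when `diag H11 ≥ diag H22`. Hence some `(A H11 + B H12ᵀ)ᵢᵢ` is negative.
-/

open Matrix

namespace Matrix

section RCLike

variable {m n 𝕜 : Type*} [RCLike 𝕜] [Fintype m] [Fintype n] [DecidableEq n]

open scoped ComplexOrder MatrixOrder

theorem PosDef.fromBlocks₂₂_of_schur [DecidableEq m] {A : Matrix m m 𝕜} (B : Matrix m n 𝕜)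
    {D : Matrix n n 𝕜} (hD : D.PosDef) (hS : (A - B * D⁻¹ * Bᴴ).PosDef) :
    (fromBlocks A B Bᴴ D).PosDef := by
  have := hD.isUnit.invertible
  refine ((PosDef.fromBlocks₂₂ A B hD).2 hS.posSemidef).posDef_iff_det_ne_zero.2 ?_
  rw [det_fromBlocks₂₂, invOf_eq_nonsing_inv]
  exact mul_ne_zero hD.det_pos.ne' hS.det_pos.ne'

/-- With `M = Lᴴ L` and `N = Cᴴ C`, `tr (M N)` is the squared Frobenius norm of `L Cᴴ`, which
vanishes only if `M Cᴴ = 0`, i.e. `C = 0`. -/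
theorem PosDef.trace_mul_pos {M N : Matrix n n 𝕜} (hM : M.PosDef) (hN : N.PosSemidef)
    (hN0 : N ≠ 0) : 0 < (M * N).trace := by
  obtain ⟨L, rfl⟩ := CStarAlgebra.nonneg_iff_eq_star_mul_self.mp hM.posSemidef.nonneg
  obtain ⟨C, rfl⟩ := CStarAlgebra.nonneg_iff_eq_star_mul_self.mp hN.nonneg
  have htrace : (star L * L * (star C * C)).trace = (L * Cᴴ * (L * Cᴴ)ᴴ).trace := by
    rw [conjTranspose_mul, conjTranspose_conjTranspose, Matrix.mul_assoc, trace_mul_comm]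
    simp only [Matrix.mul_assoc, star_eq_conjTranspose]
  rw [htrace]
  refine (posSemidef_self_mul_conjTranspose _).trace_nonneg.lt_of_ne' ?_
  rw [Ne, trace_mul_conjTranspose_self_eq_zero_iff]
  intro hLC
  have hC : star C = 0 := by
    have := congrArg (star L * ·) hLC
    simp only [Matrix.mul_zero, ← Matrix.mul_assoc] at this
    exact hM.isUnit.mul_right_eq_zero.1 this
  exact hN0 (by simp [star_eq_zero.1 hC])

end RCLike

variable {m : Type*} [Fintype m]

theorem trace_fromBlocks {R n : Type*} [AddCommMonoid R] [Fintype n] (A : Matrix m m R)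
    (B : Matrix m n R) (C : Matrix n m R) (D : Matrix n n R) :
    (fromBlocks A B C D).trace = A.trace + D.trace := by
  simp [trace, Fintype.sum_sum_type]

theorem trace_diagonal_mul_nonneg {R : Type*} [DecidableEq m] [Semiring R] [PartialOrder R]
    [IsOrderedRing R] {d : m → R} {X : Matrix m m R} (hd : ∀ i, 0 ≤ d i) (hX : ∀ i, 0 ≤ X i i) :
    0 ≤ (diagonal d * X).trace :=
  Finset.sum_nonneg fun i _ ↦ by
    simpa only [diag_apply, diagonal_mul] using mul_nonneg (hd i) (hX i)

def riccatiBlock (A B P Q : Matrix m m ℝ) : Matrix (m ⊕ m) (m ⊕ m) ℝ :=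
  fromBlocks (-(Aᵀ * P + P * A + Q)) (-(P * B)) (-(Bᵀ * P)) Q

variable {A B P Q : Matrix m m ℝ}

theorem riccatiBlock_posDef [DecidableEq m] (hP : Pᵀ = P) (hQ : Q.PosDef)
    (hRic : (-(Aᵀ * P + P * A + Q + P * B * Q⁻¹ * Bᵀ * P)).PosDef) :
    (riccatiBlock A B P Q).PosDef := by
  have hPB : (-(P * B))ᴴ = -(Bᵀ * P) := by
    rw [conjTranspose_eq_transpose_of_trivial, transpose_neg, transpose_mul, hP]
  rw [riccatiBlock, ← hPB]
  refine hQ.fromBlocks₂₂_of_schur _ ?_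
  have hSchur : -(Aᵀ * P + P * A + Q) - -(P * B) * Q⁻¹ * -(Bᵀ * P) =
      -(Aᵀ * P + P * A + Q + P * B * Q⁻¹ * Bᵀ * P) := by
    noncomm_ring
  rwa [hPB, hSchur]

theorem trace_riccatiBlock_mul (hP : Pᵀ = P) {H11 H12 H22 : Matrix m m ℝ} (hH11 : H11ᵀ = H11) :
    (riccatiBlock A B P Q * fromBlocks H11 H12 H12ᵀ H22).trace =
      -(2 * (P * (A * H11 + B * H12ᵀ)).trace + (Q * (H11 - H22)).trace) := by
  have hA : (Aᵀ * P * H11).trace = (P * A * H11).trace := by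
    rw [← trace_transpose, transpose_mul, transpose_mul, transpose_transpose, hP, hH11,
      trace_mul_comm]
  have hB : (Bᵀ * P * H12).trace = (P * B * H12ᵀ).trace := by
    rw [← trace_transpose, transpose_mul, transpose_mul, transpose_transpose, hP, trace_mul_comm]
  simp only [riccatiBlock, fromBlocks_multiply, trace_fromBlocks, Matrix.neg_mul, Matrix.add_mul,
    trace_add, trace_neg, Matrix.mul_sub, trace_sub, Matrix.mul_add, ← Matrix.mul_assoc, hA, hB]
  ring

end Matrix

theorem diag_riccati_necessary (n : ℕ) (A B : Matrix (Fin n) (Fin n) ℝ)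
    (p q : Fin n → ℝ) (hp : ∀ i, 0 < p i) (hq : ∀ i, 0 < q i)
    (hRic : (-(Aᵀ * Matrix.diagonal p + Matrix.diagonal p * A + Matrix.diagonal q +
        Matrix.diagonal p * B * (Matrix.diagonal q)⁻¹ * Bᵀ * Matrix.diagonal p)).PosDef) :
    ∀ H11 H12 H22 : Matrix (Fin n) (Fin n) ℝ,
      (Matrix.fromBlocks H11 H12 H12ᵀ H22).PosSemidef →
      Matrix.fromBlocks H11 H12 H12ᵀ H22 ≠ 0 →
      (∀ i, H22 i i ≤ H11 i i) →
      ∃ i, (A * H11 + B * H12ᵀ) i i < 0 := by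
  intro H11 H12 H22 hH hH0 hdiag
  by_contra! hcon
  have hP : (diagonal p)ᵀ = diagonal p := diagonal_transpose p
  have hH11 : H11ᵀ = H11 := (isHermitian_fromBlocks_iff.1 hH.isHermitian).1
  have hpos := (riccatiBlock_posDef hP (posDef_diagonal_iff.2 hq) hRic).trace_mul_pos hH hH0
  rw [trace_riccatiBlock_mul hP hH11] at hpos
  have hAB := trace_diagonal_mul_nonneg (fun i ↦ (hp i).le) hcon
  have hH := trace_diagonal_mul_nonneg (X := H11 - H22) (fun i ↦ (hq i).le)
    (fun i ↦ sub_nonneg.2 (hdiag i))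
  linarith
end

section
/- Let A ∈ ℝ^{n×n} be Metzler and Hurwitz. Then for every non-zero vector v ∈ ℝ^n there exists an index i such that v_i (A v)_i < 0. -/
/-!
If `v i * (A *ᵥ v) i ≥ 0` for all `i`, the Metzler property gives `A *ᵥ |v| ≥ 0`. For large `α`
the matrix `M = A + α • 1` is nonnegative with `M *ᵥ |v| ≥ α • |v|`, so `‖M ^ k‖ ≥ α ^ k` in the
`ℓ∞` operator norm and, by Gelfand's formula, the spectral radius of `M` is at least `α`. But the
eigenvalues of `M` are `μ + α` with `re μ < 0`, and since `‖μ + α‖² = ‖μ‖² + 2 α re μ + α²`, for `α`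
large they all lie in the open disc of radius `α`.
-/
open Matrix Filter

theorem spectrum.coe_le_spectralRadius_of_le_nnnorm_pow {A : Type*} [NormedRing A]
    [NormedAlgebra ℂ A] [CompleteSpace A] {a : A} {c : NNReal}
    (h : ∀ k : ℕ, c ^ k ≤ ‖a ^ k‖₊) : (c : ENNReal) ≤ spectralRadius ℂ a := by
  refine ge_of_tendsto (spectrum.pow_nnnorm_pow_one_div_tendsto_nhds_spectralRadius a) ?_
  filter_upwards [eventually_ne_atTop 0] with k hk
  calc (c : ENNReal) = ((c : ENNReal) ^ k) ^ (1 / k : ℝ) := by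
        rw [← ENNReal.rpow_natCast, ← ENNReal.rpow_mul, mul_one_div_cancel (by exact_mod_cast hk),
          ENNReal.rpow_one]
    _ ≤ (‖a ^ k‖₊ : ENNReal) ^ (1 / k : ℝ) := by gcongr; exact_mod_cast h k

theorem Complex.eventually_norm_add_ofReal_lt {z : ℂ} (hz : z.re < 0) :
    ∀ᶠ α : ℝ in atTop, ‖z + α‖ < α := by
  filter_upwards [eventually_gt_atTop 0, eventually_gt_atTop (‖z‖ ^ 2 / (-2 * z.re))]
    with α hα hαz
  rw [div_lt_iff₀ (by linarith)] at hαz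
  have hsq : ‖z + α‖ ^ 2 = ‖z‖ ^ 2 + 2 * α * z.re + α ^ 2 := by
    simp only [Complex.sq_norm, Complex.normSq_apply, Complex.add_re, Complex.add_im,
      Complex.ofReal_re, Complex.ofReal_im]
    ring
  exact lt_of_pow_lt_pow_left₀ 2 hα.le (by nlinarith)

namespace Matrix

variable {ι R : Type*} [Fintype ι]

theorem mulVec_mono_of_nonneg [Semiring R] [PartialOrder R] [IsOrderedRing R]
    {M : Matrix ι ι R} (hM : ∀ i j, 0 ≤ M i j) :
    Monotone (M *ᵥ ·) := fun _ _ hxy i =>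
  Finset.sum_le_sum fun j _ => mul_le_mul_of_nonneg_left (hxy j) (hM i j)

theorem mul_le_abs_mul_mulVec_abs_of_metzler [CommRing R] [LinearOrder R] [IsStrictOrderedRing R]
    {A : Matrix ι ι R} (hA : ∀ i j, i ≠ j → 0 ≤ A i j) (v : ι → R) (i : ι) :
    v i * (A *ᵥ v) i ≤ |v i| * (A *ᵥ |v|) i := by
  simp only [mulVec, dotProduct, Finset.mul_sum, Pi.abs_apply]
  refine Finset.sum_le_sum fun j _ => ?_
  rcases eq_or_ne i j with rfl | hij
  · linear_combination A i i * (abs_mul_abs_self (v i)).symm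
  · calc v i * (A i j * v j) = A i j * (v i * v j) := by ring
      _ ≤ A i j * (|v i| * |v j|) :=
          mul_le_mul_of_nonneg_left ((le_abs_self _).trans (abs_mul _ _).le) (hA i j hij)
      _ = |v i| * (A i j * |v j|) := by ring

theorem mulVec_abs_nonneg_of_metzler [CommRing R] [LinearOrder R] [IsStrictOrderedRing R]
    {A : Matrix ι ι R} (hA : ∀ i j, i ≠ j → 0 ≤ A i j) {v : ι → R}
    (hv : ∀ i, 0 ≤ v i * (A *ᵥ v) i) : 0 ≤ A *ᵥ |v| := by
  intro i
  by_cases hvi : v i = 0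
  · refine Finset.sum_nonneg fun j _ => ?_
    rcases eq_or_ne i j with rfl | hij
    · simp [hvi]
    · exact mul_nonneg (hA i j hij) (abs_nonneg _)
  · exact nonneg_of_mul_nonneg_right ((hv i).trans (mul_le_abs_mul_mulVec_abs_of_metzler hA v i))
      (abs_pos.mpr hvi)

theorem pow_smul_le_pow_mulVec [DecidableEq ι] [CommSemiring R] [PartialOrder R]
    [IsOrderedRing R] {M : Matrix ι ι R} (hM : ∀ i j, 0 ≤ M i j) {w : ι → R} {c : R}
    (hc : 0 ≤ c) (h : c • w ≤ M *ᵥ w) (k : ℕ) :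
    c ^ k • w ≤ (M ^ k) *ᵥ w := by
  induction k with
  | zero => simp
  | succ k ih =>
    calc c ^ (k + 1) • w = c ^ k • (c • w) := by rw [pow_succ, mul_smul]
      _ ≤ c ^ k • (M *ᵥ w) := smul_le_smul_of_nonneg_left h (pow_nonneg hc k)
      _ = M *ᵥ (c ^ k • w) := (mulVec_smul M _ w).symm
      _ ≤ M *ᵥ ((M ^ k) *ᵥ w) := mulVec_mono_of_nonneg hM ih
      _ = (M ^ (k + 1)) *ᵥ w := by rw [mulVec_mulVec, pow_succ']

section LinftyOpNorm

attribute [local instance] Matrix.linftyOpNormedAddCommGroup Matrix.linftyOpNormedRing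
  Matrix.linftyOpNormedAlgebra

theorem le_linfty_opNorm_of_smul_le_mulVec {N : Matrix ι ι ℝ} {w : ι → ℝ} {c : ℝ}
    (hw : 0 ≤ w) (hw0 : w ≠ 0) (hc : 0 ≤ c) (h : c • w ≤ N *ᵥ w) : c ≤ ‖N‖ := by
  have hcw : ‖c • w‖ ≤ ‖N *ᵥ w‖ := (pi_norm_le_iff_of_nonneg (norm_nonneg _)).2 fun i => by
    rw [Pi.smul_apply, smul_eq_mul, Real.norm_of_nonneg (mul_nonneg hc (hw i))]
    exact (h i).trans ((le_abs_self _).trans (norm_le_pi_norm (N *ᵥ w) i))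
  rw [norm_smul, Real.norm_of_nonneg hc] at hcw
  exact le_of_mul_le_mul_right (hcw.trans (linfty_opNorm_mulVec N w)) (norm_pos_iff.mpr hw0)

theorem linfty_opNNNorm_map_ofReal {m n : Type*} [Fintype m] [Fintype n] (M : Matrix m n ℝ) :
    ‖M.map Complex.ofReal‖₊ = ‖M‖₊ := by
  simp [linfty_opNNNorm_def]

theorem ofReal_le_spectralRadius_of_smul_le_mulVec [DecidableEq ι] {M : Matrix ι ι ℝ}
    (hM : ∀ i j, 0 ≤ M i j) {w : ι → ℝ} (hw : 0 ≤ w) (hw0 : w ≠ 0) {c : ℝ} (hc : 0 ≤ c)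
    (h : c • w ≤ M *ᵥ w) : ENNReal.ofReal c ≤ spectralRadius ℂ (M.map Complex.ofReal) := by
  refine spectrum.coe_le_spectralRadius_of_le_nnnorm_pow fun k => ?_
  have hpow : M.map Complex.ofReal ^ k = (M ^ k).map Complex.ofReal :=
    (M.map_pow Complex.ofRealHom k).symm
  rw [hpow, linfty_opNNNorm_map_ofReal,
    ← NNReal.coe_le_coe, NNReal.coe_pow, Real.coe_toNNReal c hc, coe_nnnorm]
  exact le_linfty_opNorm_of_smul_le_mulVec hw hw0 (pow_nonneg hc k)
    (pow_smul_le_pow_mulVec hM hc h k)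

theorem exists_re_nonneg_mem_spectrum_of_metzler [DecidableEq ι] {A : Matrix ι ι ℝ}
    (hA : ∀ i j, i ≠ j → 0 ≤ A i j) {w : ι → ℝ} (hw : 0 ≤ w) (hw0 : w ≠ 0)
    (hAw : 0 ≤ A *ᵥ w) : ∃ μ ∈ spectrum ℂ (A.map Complex.ofReal), 0 ≤ μ.re := by
  by_contra! hre
  obtain ⟨α, hα, hdiag, hdisk⟩ : ∃ α : ℝ, 0 ≤ α ∧ (∀ i, -A i i ≤ α) ∧
      ∀ μ ∈ spectrum ℂ (A.map Complex.ofReal), ‖μ + α‖ < α :=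
    ((eventually_ge_atTop 0).and ((eventually_all.2 fun i => eventually_ge_atTop (-A i i)).and
      ((A.map Complex.ofReal).finite_spectrum.eventually_all.2 fun μ hμ =>
        Complex.eventually_norm_add_ofReal_lt (hre μ hμ)))).exists
  set M : Matrix ι ι ℝ := A + α • 1
  have hM : ∀ i j, 0 ≤ M i j := by
    intro i j
    rcases eq_or_ne i j with rfl | hij
    · simpa [M] using neg_le_iff_add_nonneg'.mp (hdiag i)
    · simpa [M, hij] using hA i j hij
  have hMw : α • w ≤ M *ᵥ w := by
    simpa [M, add_mulVec, smul_mulVec] using hAw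
  have hMc : M.map Complex.ofReal = A.map Complex.ofReal + algebraMap ℂ _ α := by
    ext i j
    rcases eq_or_ne i j with rfl | hij <;> simp [M, algebraMap_eq_diagonal, *]
  have : Nonempty ι := not_isEmpty_iff.mp fun _ => hw0 (Subsingleton.elim _ _)
  obtain ⟨z, hz, hzρ⟩ := spectrum.exists_nnnorm_eq_spectralRadius (M.map Complex.ofReal)
  rw [hMc, ← spectrum.add_singleton_eq] at hz
  obtain ⟨μ, hμ, _, rfl, rfl⟩ := hz
  have hρ := ofReal_le_spectralRadius_of_smul_le_mulVec hM hw hw0 hα hMw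
  rw [← hzρ, ← ENNReal.ofReal_coe_nnreal, coe_nnnorm,
    ENNReal.ofReal_le_ofReal_iff (norm_nonneg _)] at hρ
  exact (hdisk μ hμ).not_ge hρ

end LinftyOpNorm

end Matrix

theorem metzler_hurwitz_neg_component (n : ℕ) (A : Matrix (Fin n) (Fin n) ℝ)
    (hMetzler : ∀ i j, i ≠ j → 0 ≤ A i j)
    (hHurwitz : ∀ μ ∈ spectrum ℂ (A.map Complex.ofReal), μ.re < 0) :
    ∀ v : Fin n → ℝ, v ≠ 0 → ∃ i, v i * (A.mulVec v) i < 0 := by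
  intro v hv
  by_contra! hv_nonneg
  obtain ⟨μ, hμ, hre⟩ := exists_re_nonneg_mem_spectrum_of_metzler hMetzler (abs_nonneg v)
    (mt (Pi.abs_eq_zero v).mp hv) (mulVec_abs_nonneg_of_metzler hMetzler hv_nonneg)
  exact (hHurwitz μ hμ).not_ge hre
end

section
/- Let A ∈ ℝ^{n×n} be Metzler. Then A is Hurwitz if and only if there exists a vector v with all entries strictly positive such that A v has all entries strictly negative. -/
/-!
If `v ≫ 0` and `A v ≪ 0`, Gershgorin's theorem applied to `D⁻¹ A D` with `D = diag v` puts each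
eigenvalue in a disc around some `A k k` of radius `∑_{j ≠ k} A k j v j / v k < -A k k`, which lies
in the open left half-plane.

Conversely, write `A = B - s • 1` with `B ≥ 0`. For large `t` the resolvent `(t • 1 - A)⁻¹` is a
Neumann series in `B` and hence entrywise nonnegative. Nonnegativity propagates downwards: if
`R = (t • 1 - A)⁻¹ ≥ 0`, then `(t' • 1 - A)⁻¹ = (1 - (t - t') R)⁻¹ R ≥ 0` for `t' < t` close to `t`.
Since no eigenvalue of a Hurwitz matrix lies on `[0, ∞)`, the resolvent is continuous there, so
continuous induction brings nonnegativity down to `t = 0`. Then `v = (-A)⁻¹ 1` is positive (an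
invertible matrix has no zero row) and `A v = -1`.
-/

open Matrix Set Finset Module.End Topology


namespace Matrix

theorem mul_apply_nonneg {R l m n : Type*} [Semiring R] [PartialOrder R] [IsOrderedRing R]
    [Fintype m] {M : Matrix l m R} {N : Matrix m n R} (hM : ∀ i j, 0 ≤ M i j)
    (hN : ∀ i j, 0 ≤ N i j) (i : l) (k : n) : 0 ≤ (M * N) i k :=
  Finset.sum_nonneg fun j _ => mul_nonneg (hM i j) (hN j k)

theorem isClosed_setOf_apply_nonneg {R m n : Type*} [TopologicalSpace R] [Preorder R] [Zero R]
    [OrderClosedTopology R] : IsClosed {M : Matrix m n R | ∀ i j, 0 ≤ M i j} := by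
  simp only [Set.ofPred_forall]
  exact isClosed_iInter fun i => isClosed_iInter fun j =>
    isClosed_le continuous_const (continuous_id.matrix_elem i j)

theorem smul_one_apply_nonneg {R n : Type*} [Semiring R] [PartialOrder R] [IsOrderedRing R]
    [DecidableEq n] {c : R} (hc : 0 ≤ c) : ∀ i j, 0 ≤ (c • 1 : Matrix n n R) i j :=
  fun i j => by rw [smul_apply, one_apply]; split_ifs <;> simp [hc]

variable {ι : Type*} [Fintype ι] [DecidableEq ι]

theorem mulVec_one_pos_of_nonneg {R : Type*} [CommRing R] [LinearOrder R] [IsStrictOrderedRing R]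
    {N : Matrix ι ι R} (hN : ∀ i j, 0 ≤ N i j) (hdet : IsUnit N.det) (i : ι) :
    0 < (N *ᵥ 1) i := by
  have hsum : (N *ᵥ 1) i = ∑ j, N i j := by simp [mulVec, dotProduct]
  rw [hsum]
  refine (Finset.sum_nonneg fun j _ => hN i j).lt_of_ne fun h => hdet.ne_zero ?_
  refine det_eq_zero_of_row_eq_zero i fun j => ?_
  exact (Finset.sum_eq_zero_iff_of_nonneg fun j _ => hN i j).mp h.symm j (mem_univ j)

theorem exists_add_smul_one_apply_nonneg {R : Type*} [Ring R] [LinearOrder R] [IsOrderedRing R]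
    {A : Matrix ι ι R} (hA : Pairwise fun i j => 0 ≤ A i j) :
    ∃ s : R, 0 ≤ s ∧ ∀ i j, 0 ≤ (A + s • 1) i j := by
  refine ⟨∑ i, |A i i|, Finset.sum_nonneg fun i _ => abs_nonneg _, fun i j => ?_⟩
  rcases eq_or_ne i j with rfl | hij
  · have := Finset.single_le_sum (f := fun i => |A i i|) (fun k _ => abs_nonneg _) (mem_univ i)
    simp only [add_apply, smul_apply, one_apply_eq, smul_eq_mul, mul_one]
    calc 0 ≤ A i i + |A i i| := neg_le_iff_add_nonneg'.mp (neg_le_abs _)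
      _ ≤ A i i + ∑ i, |A i i| := by gcongr
  · simpa [one_apply_ne hij] using hA hij

theorem isUnit_det_smul_one_sub_iff {R : Type*} [CommRing R] {A : Matrix ι ι R} {t : R} :
    IsUnit (t • 1 - A).det ↔ t ∉ spectrum R A := by
  rw [spectrum.mem_iff, not_not, Algebra.algebraMap_eq_smul_one, isUnit_iff_isUnit_det]

theorem map_mem_spectrum_map_iff {K L : Type*} [Field K] [Field L] (f : K →+* L)
    (A : Matrix ι ι K) (t : K) : f t ∈ spectrum L (A.map f) ↔ t ∈ spectrum K A := by
  simp only [mem_spectrum_iff_isRoot_charpoly, charpoly_map, Polynomial.IsRoot.def,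
    Polynomial.eval_map_apply, map_eq_zero]

/-- Gershgorin's theorem for `D⁻¹ M D` with `D = diagonal w`, which has the same eigenvalues. -/
theorem exists_norm_sub_diag_mul_le_of_hasEigenvalue {K : Type*} [NormedField K]
    {M : Matrix ι ι K} {μ : K} (hμ : HasEigenvalue (toLin' M) μ) {w : ι → K}
    (hw : ∀ i, w i ≠ 0) :
    ∃ k, ‖μ - M k k‖ * ‖w k‖ ≤ ∑ j ∈ univ.erase k, ‖M k j‖ * ‖w j‖ := by
  obtain ⟨x, hx, hx0⟩ := hμ.exists_hasEigenvector
  have hMx : M *ᵥ x = μ • x := mem_eigenspace_iff.mp hx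
  set M' : Matrix ι ι K := of fun k j => M k j * w j / w k
  have hM' : HasEigenvalue (toLin' M') μ := by
    refine hasEigenvalue_of_hasEigenvector (x := fun j => x j / w j) ⟨?_, ?_⟩
    · rw [mem_eigenspace_iff, toLin'_apply]
      ext k
      have hrow := congrFun hMx k
      simp only [mulVec, dotProduct, Pi.smul_apply, smul_eq_mul] at hrow ⊢
      rw [mul_div_assoc', ← hrow, Finset.sum_div]
      refine Finset.sum_congr rfl fun j _ => ?_
      simp only [M', of_apply]
      field_simp [hw j, hw k]
    · exact fun h => hx0 (funext fun j => by simpa [hw j] using congrFun h j)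
  obtain ⟨k, hk⟩ := eigenvalue_mem_ball hM'
  refine ⟨k, ?_⟩
  rw [mem_closedBall_iff_norm] at hk
  simp only [M', of_apply, mul_div_assoc, div_self (hw k), mul_one, norm_mul, norm_div] at hk
  rw [← le_div_iff₀ (norm_pos_iff.mpr (hw k)), Finset.sum_div]
  simpa only [mul_div_assoc] using hk

section LinftyOpNorm

attribute [local instance] Matrix.linftyOpNormedRing Matrix.linftyOpNormedAlgebra

theorem inv_one_sub_apply_nonneg {Y : Matrix ι ι ℝ} (hY : ∀ i j, 0 ≤ Y i j) (hY1 : ‖Y‖ < 1) :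
    ∀ i j, 0 ≤ (1 - Y)⁻¹ i j := by
  rw [inv_eq_right_inv (mul_neg_geom_series Y hY1)]
  intro i j
  -- The norm topology is not syntactically the product topology, so `Matrix.tsum_apply` does
  -- not apply; read the entry off through a continuous linear map instead.
  have hentry := (entryLinearMap ℝ ℝ i j).toContinuousLinearMap.map_tsum
    (summable_geometric_of_norm_lt_one hY1)
  simp only [LinearMap.coe_toContinuousLinearMap', entryLinearMap_apply] at hentry
  exact hentry ▸ tsum_nonneg fun k => pow_apply_nonneg hY k i j

theorem inv_sub_apply_nonneg {M Y : Matrix ι ι ℝ} (hM : IsUnit M.det)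
    (hMinv : ∀ i j, 0 ≤ M⁻¹ i j) (hY : ∀ i j, 0 ≤ Y i j) (hsmall : ‖M⁻¹ * Y‖ < 1) :
    ∀ i j, 0 ≤ (M - Y)⁻¹ i j := by
  have hfactor : M - Y = M * (1 - M⁻¹ * Y) := by
    rw [mul_sub, mul_one, mul_nonsing_inv_cancel_left _ _ hM]
  rw [hfactor, mul_inv_rev]
  exact mul_apply_nonneg (inv_one_sub_apply_nonneg (mul_apply_nonneg hMinv hY) hsmall) hMinv

theorem inv_smul_one_sub_apply_nonneg {B : Matrix ι ι ℝ} (hB : ∀ i j, 0 ≤ B i j) {r : ℝ}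
    (hr : ‖B‖ < r) : ∀ i j, 0 ≤ (r • 1 - B)⁻¹ i j := by
  have hr0 : 0 < r := (norm_nonneg B).trans_lt hr
  have hinv : (r • 1 : Matrix ι ι ℝ) * (r⁻¹ • 1) = 1 := by
    rw [smul_mul_smul, mul_one, mul_inv_cancel₀ hr0.ne', one_smul]
  refine inv_sub_apply_nonneg (isUnit_det_of_right_inverse hinv) ?_ hB ?_
  · rw [inv_eq_right_inv hinv]
    exact smul_one_apply_nonneg (inv_nonneg.mpr hr0.le)
  · rw [inv_eq_right_inv hinv, smul_mul, one_mul, norm_smul, norm_inv, Real.norm_of_nonneg hr0.le]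
    exact (inv_mul_lt_one₀ hr0).mpr hr

theorem eventually_inv_smul_one_sub_apply_nonneg {A : Matrix ι ι ℝ} {x : ℝ}
    (hx : IsUnit (x • 1 - A).det) (hnonneg : ∀ i j, 0 ≤ (x • 1 - A)⁻¹ i j) :
    ∀ᶠ z in 𝓝[<] x, ∀ i j, 0 ≤ (z • 1 - A)⁻¹ i j := by
  set R := (x • 1 - A)⁻¹
  set δ := (‖R‖ + 1)⁻¹
  have hδ : 0 < δ := by positivity
  refine Filter.eventually_of_mem (Ioo_mem_nhdsLT (sub_lt_self x hδ)) fun z ⟨hzδ, hzx⟩ => ?_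
  have hshift : z • 1 - A = (x • 1 - A) - (x - z) • 1 := by rw [sub_smul]; abel
  rw [hshift]
  refine inv_sub_apply_nonneg hx hnonneg (smul_one_apply_nonneg (by linarith)) ?_
  rw [Matrix.mul_smul, mul_one, norm_smul, Real.norm_of_nonneg (by linarith)]
  calc (x - z) * ‖R‖ ≤ δ * ‖R‖ := by gcongr; linarith
    _ < 1 := by rw [inv_mul_lt_one₀ (by positivity)]; linarith

theorem exists_inv_smul_one_sub_apply_nonneg {A : Matrix ι ι ℝ}
    (hA : Pairwise fun i j => 0 ≤ A i j) :
    ∃ b : ℝ, 0 ≤ b ∧ ∀ i j, 0 ≤ (b • 1 - A)⁻¹ i j := by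
  obtain ⟨s, hs, hB⟩ := exists_add_smul_one_apply_nonneg hA
  refine ⟨‖A + s • 1‖ + 1, by positivity, ?_⟩
  have hshift : (‖A + s • 1‖ + 1) • 1 - A = (‖A + s • 1‖ + 1 + s) • 1 - (A + s • 1) := by
    rw [add_smul _ s]; abel
  rw [hshift]
  exact inv_smul_one_sub_apply_nonneg hB (by linarith)

end LinftyOpNorm

theorem inv_smul_one_sub_apply_nonneg_of_le {A : Matrix ι ι ℝ} {a b : ℝ} (hab : a ≤ b)
    (hdet : ∀ t ∈ Icc a b, IsUnit (t • 1 - A).det) (hb : ∀ i j, 0 ≤ (b • 1 - A)⁻¹ i j) :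
    ∀ i j, 0 ≤ (a • 1 - A)⁻¹ i j := by
  have hcont : ContinuousOn (fun t : ℝ => (t • 1 - A)⁻¹) (Icc a b) := fun t ht => by
    have hinv : ContinuousAt Ring.inverse (t • 1 - A).det := by
      rw [Ring.inverse_eq_inv']; exact continuousAt_inv₀ (hdet t ht).ne_zero
    exact ((continuousAt_matrix_inv _ hinv).comp (f := fun t : ℝ => t • 1 - A)
      (by fun_prop)).continuousWithinAt
  have hclosed := hcont.preimage_isClosed_of_isClosed isClosed_Icc isClosed_setOf_apply_nonneg
  rw [Set.inter_comm] at hclosed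
  refine hclosed.mem_of_ge_of_forall_exists_lt hb hab fun x ⟨hx, hax, hxb⟩ => ?_
  obtain ⟨z, hz, hza, hzx⟩ :=
    ((eventually_inv_smul_one_sub_apply_nonneg (hdet x ⟨hax.le, hxb⟩) hx).and
      (Ioo_mem_nhdsLT hax)).exists
  exact ⟨z, hz, hza.le, hzx⟩

theorem exists_pos_mulVec_neg_of_isUnit_det {A : Matrix ι ι ℝ}
    (hA : Pairwise fun i j => 0 ≤ A i j) (hdet : ∀ t : ℝ, 0 ≤ t → IsUnit (t • 1 - A).det) :
    ∃ v : ι → ℝ, (∀ i, 0 < v i) ∧ ∀ i, (A *ᵥ v) i < 0 := by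
  obtain ⟨b, hb0, hb⟩ := exists_inv_smul_one_sub_apply_nonneg hA
  have hN := inv_smul_one_sub_apply_nonneg_of_le hb0 (fun t ht => hdet t ht.1) hb
  have hdet0 := hdet 0 le_rfl
  rw [zero_smul, zero_sub] at hN hdet0
  refine ⟨(-A)⁻¹ *ᵥ 1, mulVec_one_pos_of_nonneg hN (isUnit_nonsing_inv_det _ hdet0), fun i => ?_⟩
  have hAN : A * (-A)⁻¹ = -1 := by
    rw [← neg_neg (A * _), ← neg_mul, mul_nonsing_inv _ hdet0]
  simp [mulVec_mulVec, hAN, neg_mulVec]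

theorem re_lt_zero_of_mem_spectrum_of_pos_mulVec_neg {A : Matrix ι ι ℝ}
    (hA : Pairwise fun i j => 0 ≤ A i j) {v : ι → ℝ} (hv : ∀ i, 0 < v i)
    (hAv : ∀ i, (A *ᵥ v) i < 0) {μ : ℂ} (hμ : μ ∈ spectrum ℂ (A.map Complex.ofReal)) :
    μ.re < 0 := by
  have hμ' : HasEigenvalue (toLin' (A.map Complex.ofReal)) μ :=
    hasEigenvalue_iff_mem_spectrum.mpr (by rwa [spectrum_toLin'])
  obtain ⟨k, hk⟩ := exists_norm_sub_diag_mul_le_of_hasEigenvalue hμ' (w := fun i => (v i : ℂ))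
    fun i => Complex.ofReal_ne_zero.mpr (hv i).ne'
  have hoff : ∑ j ∈ univ.erase k, ‖A k j‖ * ‖v j‖ = (A *ᵥ v) k - A k k * v k := by
    rw [mulVec, dotProduct, ← sum_erase_eq_sub (mem_univ k)]
    refine Finset.sum_congr rfl fun j hj => ?_
    rw [Real.norm_of_nonneg (hA (ne_of_mem_erase hj).symm), Real.norm_of_nonneg (hv j).le]
  simp only [map_apply, Complex.norm_real, Real.norm_of_nonneg (hv k).le, hoff] at hk
  have hdisc : ‖μ - A k k‖ < -A k k := by
    nlinarith [hAv k, hv k]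
  calc μ.re = (μ - A k k).re + A k k := by simp
    _ ≤ ‖μ - A k k‖ + A k k := by gcongr; exact Complex.re_le_norm _
    _ < 0 := by linarith

end Matrix

theorem metzler_hurwitz_iff_pos_vector (n : ℕ) (A : Matrix (Fin n) (Fin n) ℝ)
    (hMetzler : ∀ i j, i ≠ j → 0 ≤ A i j) :
    (∀ μ ∈ spectrum ℂ (A.map Complex.ofReal), μ.re < 0) ↔
    (∃ v : Fin n → ℝ, (∀ i, 0 < v i) ∧ (∀ i, (A.mulVec v) i < 0)) := by
  constructor
  · refine fun hHurwitz => exists_pos_mulVec_neg_of_isUnit_det hMetzler fun t _ =>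
      isUnit_det_smul_one_sub_iff.mpr fun ht_mem => ?_
    have := hHurwitz _ ((map_mem_spectrum_map_iff Complex.ofRealHom A t).mpr ht_mem)
    rw [Complex.ofRealHom_eq_coe, Complex.ofReal_re] at this
    linarith
  · rintro ⟨v, hv, hAv⟩ μ hμ
    exact re_lt_zero_of_mem_spectrum_of_pos_mulVec_neg hMetzler hv hAv hμ
end

section
/- Let A ∈ ℝ^{n×n} be Metzler. Then A is Hurwitz if and only if there exists a diagonal positive definite matrix D with A^T D + D A negative definite. -/
/-!
For Metzler `A`, choose `ε > 0` so small that `M = 1 + ε A` is entrywise nonnegative with spectrum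
in the open unit disc. By Gelfand's formula some power of `M` is a contraction, so
`(1 - M)⁻¹ = -(ε A)⁻¹` is a nonnegative Neumann-type series; applied to the all-ones vector it gives
`x > 0` with `A x < 0`, and likewise `y > 0` with `Aᵀ y < 0`. For `D = diag (y / x)` the symmetric
Metzler matrix `S = Aᵀ D + D A` satisfies `S x = Aᵀ y + D A x < 0`, and a symmetric Metzler matrix
that is negative on a positive vector is negative definite.
Conversely, for an eigenpair `(μ, v)` the Lyapunov inequality gives
`2 Re μ · v* D v = v* (Aᵀ D + D A) v < 0`.
-/

open Matrix Filter Topology Finset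

theorem Complex.eventually_norm_one_add_mul_lt_one {μ : ℂ} (hμ : μ.re < 0) :
    ∀ᶠ ε : ℝ in 𝓝[>] 0, ‖1 + (ε : ℂ) * μ‖ < 1 := by
  -- `‖1 + ε μ‖² = 1 + ε (2 Re μ + ε ‖μ‖²)`
  have hlim : Tendsto (fun ε : ℝ => 2 * μ.re + ε * Complex.normSq μ) (𝓝[>] 0)
      (𝓝 (2 * μ.re)) := by
    refine tendsto_nhdsWithin_of_tendsto_nhds ?_
    simpa using ((continuous_id.mul continuous_const).const_add (2 * μ.re)).tendsto 0
  filter_upwards [hlim.eventually_lt_const (by linarith), self_mem_nhdsWithin] with ε h (hε : 0 < ε)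
  rw [← sq_lt_one_iff₀ (norm_nonneg _), Complex.sq_norm, Complex.normSq_apply]
  rw [Complex.normSq_apply] at h
  simp only [Complex.add_re, Complex.add_im, Complex.one_re, Complex.one_im, Complex.mul_re,
    Complex.mul_im, Complex.ofReal_re, Complex.ofReal_im]
  nlinarith [mul_neg_of_pos_of_neg hε (show 2 * μ.re + ε * (μ.re * μ.re + μ.im * μ.im) < 0 by
    linarith)]

theorem spectrum.one_add_smul_eq {R A : Type*} [Field R] [Ring A] [Algebra R A] (a : A) {ε : R}
    (hε : ε ≠ 0) : spectrum R (1 + ε • a) = (fun μ => 1 + ε * μ) '' spectrum R a := by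
  lift ε to Rˣ using hε.isUnit
  rw [← map_one (algebraMap R A), ← spectrum.vadd_eq, ← Units.smul_def,
    spectrum.unit_smul_eq_smul, ← Set.image_smul, ← Set.image_vadd, Set.image_image]
  rfl

theorem spectrum.eventually_norm_pow_lt_one {A : Type*} [NormedRing A] [NormedAlgebra ℂ A]
    [CompleteSpace A] {a : A} (ha : ∀ z ∈ spectrum ℂ a, ‖z‖ < 1) :
    ∀ᶠ k : ℕ in atTop, ‖a ^ k‖ < 1 := by
  nontriviality A
  have hρ : spectralRadius ℂ a < 1 := by
    simpa using spectrum.spectralRadius_lt_of_forall_lt a (r := 1) fun z hz => by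
      simpa [← NNReal.coe_lt_coe] using ha z hz
  filter_upwards [(spectrum.pow_norm_pow_one_div_tendsto_nhds_spectralRadius a).eventually_lt_const
    hρ, eventually_gt_atTop 0] with k hk hk0
  rw [ENNReal.ofReal_lt_one] at hk
  by_contra! h
  exact hk.not_ge (Real.one_le_rpow h (by positivity))

namespace Matrix

variable {ι : Type*}

def IsMetzler {R : Type*} [Zero R] [LE R] (A : Matrix ι ι R) : Prop :=
  ∀ i j, i ≠ j → 0 ≤ A i j

theorem IsMetzler.transpose {R : Type*} [Zero R] [LE R] {A : Matrix ι ι R} (hA : A.IsMetzler) :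
    Aᵀ.IsMetzler :=
  fun i j hij => hA j i hij.symm

section Fintype

variable [Fintype ι]

theorem IsMetzler.pos_of_nonneg_of_mulVec_neg {A : Matrix ι ι ℝ} (hA : A.IsMetzler)
    {x : ι → ℝ} (hx : ∀ i, 0 ≤ x i) (hAx : ∀ i, (A *ᵥ x) i < 0) (i : ι) : 0 < x i := by
  refine (hx i).lt_of_ne fun hxi => (hAx i).not_ge ?_
  refine sum_nonneg fun j _ => ?_
  rcases eq_or_ne i j with rfl | hij
  · simp [← hxi]
  · exact mul_nonneg (hA i j hij) (hx j)

theorem IsMetzler.posDef_neg_of_isSymm_of_mulVec_neg {S : Matrix ι ι ℝ} (hS : S.IsMetzler)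
    (hsymm : S.IsSymm) {x : ι → ℝ} (hx : ∀ i, 0 < x i) (hSx : ∀ i, (S *ᵥ x) i < 0) :
    (-S).PosDef := by
  refine posDef_iff_dotProduct_mulVec.2 ⟨isHermitian_iff_isSymm.2 hsymm.neg, fun v hv => ?_⟩
  simp only [star_trivial, neg_mulVec, dotProduct_neg, neg_pos]
  -- writing `v = x * u`, AM-GM and symmetry bound `vᵀ S v` by `∑ i, u i ^ 2 * x i * (S x) i < 0`
  set u : ι → ℝ := fun i => v i / x i
  have hv_eq : ∀ i, v i = x i * u i := fun i => (mul_div_cancel₀ _ (hx i).ne').symm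
  have hamgm : ∀ i j, 2 * (S i j * v i * v j) ≤
      S i j * x i * x j * u i ^ 2 + S i j * x i * x j * u j ^ 2 := by
    intro i j
    rw [hv_eq i, hv_eq j]
    rcases eq_or_ne i j with rfl | hij
    · exact le_of_eq (by ring)
    · have := mul_nonneg (mul_nonneg (hS i j hij) (hx i).le) (hx j).le
      nlinarith [mul_nonneg this (sq_nonneg (u i - u j))]
  have hswap : ∑ i, ∑ j, S i j * x i * x j * u j ^ 2 =
      ∑ i, ∑ j, S i j * x i * x j * u i ^ 2 := by
    rw [sum_comm]
    refine sum_congr rfl fun i _ => sum_congr rfl fun j _ => ?_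
    rw [hsymm.apply]
    ring
  have hrow : ∑ i, ∑ j, S i j * x i * x j * u i ^ 2 = ∑ i, u i ^ 2 * x i * (S *ᵥ x) i := by
    refine sum_congr rfl fun i _ => ?_
    simp only [mulVec, dotProduct, mul_sum]
    exact sum_congr rfl fun j _ => by ring
  obtain ⟨i₀, hi₀⟩ := Function.ne_iff.mp hv
  have hneg : ∑ i, u i ^ 2 * x i * (S *ᵥ x) i < 0 := by
    refine sum_neg' (fun i _ => ?_) ⟨i₀, mem_univ _, ?_⟩
    · exact mul_nonpos_of_nonneg_of_nonpos (by have := hx i; positivity) (hSx i).le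
    · have : u i₀ ≠ 0 := div_ne_zero hi₀ (hx i₀).ne'
      exact mul_neg_of_pos_of_neg (by have := hx i₀; positivity) (hSx i₀)
  have hquad : v ⬝ᵥ S *ᵥ v = ∑ i, ∑ j, S i j * v i * v j := by
    simp only [mulVec, dotProduct, mul_sum]
    exact sum_congr rfl fun i _ => sum_congr rfl fun j _ => by ring
  have hsum := sum_le_sum fun i (_ : i ∈ univ) => sum_le_sum fun j (_ : j ∈ univ) => hamgm i j
  simp only [← mul_sum, sum_add_distrib, hswap, hrow] at hsum
  linarith

theorem mulVec_re_im_of_map_ofReal_mulVec_eq_smul {A : Matrix ι ι ℝ} {μ : ℂ} {v : ι → ℂ}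
    (h : A.map Complex.ofReal *ᵥ v = μ • v) :
    A *ᵥ (Complex.re ∘ v) = μ.re • (Complex.re ∘ v) - μ.im • (Complex.im ∘ v) ∧
      A *ᵥ (Complex.im ∘ v) = μ.im • (Complex.re ∘ v) + μ.re • (Complex.im ∘ v) := by
  have hi : ∀ i, ∑ j, (A i j : ℂ) * v j = μ * v i := fun i => by
    simpa [mulVec, dotProduct] using congrFun h i
  constructor <;> ext i
  · simpa [mulVec, dotProduct, Complex.re_sum] using congrArg Complex.re (hi i)
  · simpa [mulVec, dotProduct, Complex.im_sum, add_comm] using congrArg Complex.im (hi i)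

theorem dotProduct_transpose_mul_add_mul_mulVec {A P : Matrix ι ι ℝ} (hP : P.IsSymm)
    (w : ι → ℝ) : w ⬝ᵥ (Aᵀ * P + P * A) *ᵥ w = 2 * (P *ᵥ w ⬝ᵥ A *ᵥ w) := by
  rw [add_mulVec, dotProduct_add, ← mulVec_mulVec, ← mulVec_mulVec, dotProduct_mulVec,
    dotProduct_mulVec w P, vecMul_transpose, ← mulVec_transpose, hP.eq, dotProduct_comm (A *ᵥ w)]
  ring

theorem PosDef.dotProduct_mulVec_add_pos {P : Matrix ι ι ℝ} (hP : P.PosDef) {X Y : ι → ℝ}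
    (h : X ≠ 0 ∨ Y ≠ 0) : 0 < X ⬝ᵥ P *ᵥ X + Y ⬝ᵥ P *ᵥ Y := by
  have hX := hP.posSemidef.dotProduct_mulVec_nonneg X
  have hY := hP.posSemidef.dotProduct_mulVec_nonneg Y
  simp only [star_trivial] at hX hY
  rcases h with h | h
  · simpa using add_pos_of_pos_of_nonneg (hP.dotProduct_mulVec_pos h) hY
  · simpa using add_pos_of_nonneg_of_pos hX (hP.dotProduct_mulVec_pos h)

end Fintype

variable [Fintype ι] [DecidableEq ι]

def IsHurwitz (A : Matrix ι ι ℝ) : Prop :=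
  ∀ μ ∈ spectrum ℂ (A.map Complex.ofReal), μ.re < 0

theorem spectrum_transpose {K : Type*} [Field K] (A : Matrix ι ι K) :
    spectrum K Aᵀ = spectrum K A := by
  ext μ
  simp only [mem_spectrum_iff_isRoot_charpoly, charpoly_transpose]

theorem IsHurwitz.transpose {A : Matrix ι ι ℝ} (hA : A.IsHurwitz) : Aᵀ.IsHurwitz := by
  intro μ hμ
  rw [transpose_map, spectrum_transpose] at hμ
  exact hA μ hμ

theorem isHurwitz_of_posDef_lyapunov {A P : Matrix ι ι ℝ} (hP : P.PosDef)
    (hQ : (-(Aᵀ * P + P * A)).PosDef) : A.IsHurwitz := by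
  intro μ hμ
  rw [← spectrum_toLin', ← Module.End.hasEigenvalue_iff_mem_spectrum] at hμ
  obtain ⟨v, hv, hv0⟩ := hμ.exists_hasEigenvector
  obtain ⟨hX, hY⟩ := mulVec_re_im_of_map_ofReal_mulVec_eq_smul
    (by simpa using Module.End.mem_eigenspace_iff.1 hv)
  set X := Complex.re ∘ v
  set Y := Complex.im ∘ v
  have hXY : X ≠ 0 ∨ Y ≠ 0 := by
    by_contra! h0
    exact hv0 (funext fun i => Complex.ext (congrFun h0.1 i) (congrFun h0.2 i))
  have hsymm : P.IsSymm := isHermitian_iff_isSymm.1 hP.isHermitian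
  have hPXY : P *ᵥ Y ⬝ᵥ X = P *ᵥ X ⬝ᵥ Y := by
    rw [dotProduct_comm, dotProduct_mulVec, ← mulVec_transpose, hsymm.eq]
  have hquad : X ⬝ᵥ (-(Aᵀ * P + P * A)) *ᵥ X + Y ⬝ᵥ (-(Aᵀ * P + P * A)) *ᵥ Y =
      -(2 * μ.re) * (X ⬝ᵥ P *ᵥ X + Y ⬝ᵥ P *ᵥ Y) := by
    simp only [neg_mulVec, dotProduct_neg, dotProduct_transpose_mul_add_mul_mulVec hsymm, hX, hY,
      dotProduct_sub, dotProduct_add, dotProduct_smul, smul_eq_mul, hPXY,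
      dotProduct_comm (P *ᵥ X) X, dotProduct_comm (P *ᵥ Y) Y]
    ring
  nlinarith [hQ.dotProduct_mulVec_add_pos hXY, hP.dotProduct_mulVec_add_pos hXY]

theorem IsMetzler.posDef_neg_lyapunov_diagonal {A : Matrix ι ι ℝ} (hA : A.IsMetzler)
    {x y : ι → ℝ} (hx : ∀ i, 0 < x i) (hAx : ∀ i, (A *ᵥ x) i < 0) (hy : ∀ i, 0 < y i)
    (hAy : ∀ i, (Aᵀ *ᵥ y) i < 0) :
    (-(Aᵀ * diagonal (y / x) + diagonal (y / x) * A)).PosDef := by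
  have hd : ∀ i, 0 < (y / x) i := fun i => div_pos (hy i) (hx i)
  have hDx : diagonal (y / x) *ᵥ x = y := funext fun i => by
    simp [mulVec_diagonal, div_mul_cancel₀ _ (hx i).ne']
  refine IsMetzler.posDef_neg_of_isSymm_of_mulVec_neg (fun i j hij => ?_) ?_ hx fun i => ?_
  · simp only [add_apply, mul_diagonal, diagonal_mul, transpose_apply]
    have := hA j i hij.symm
    have := hA i j hij
    have := hd i
    have := hd j
    positivity
  · rw [IsSymm, transpose_add, transpose_mul, transpose_mul, transpose_transpose,
      diagonal_transpose, add_comm]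
  · rw [add_mulVec, ← mulVec_mulVec, ← mulVec_mulVec, hDx, Pi.add_apply, mulVec_diagonal]
    nlinarith [hAy i, mul_neg_of_pos_of_neg (hd i) (hAx i)]

section Neumann

attribute [local instance] Matrix.linftyOpNormedRing Matrix.linftyOpNormedAlgebra

theorem exists_nonneg_one_sub_mul_eq_one_of_norm_pow_lt_one {M : Matrix ι ι ℝ}
    (hM : ∀ i j, 0 ≤ M i j) {k : ℕ} (hk : ‖M ^ k‖ < 1) :
    ∃ S : Matrix ι ι ℝ, (∀ i j, 0 ≤ S i j) ∧ (1 - M) * S = 1 := by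
  -- `(1 - M)⁻¹ = (∑_{l<k} M ^ l) (1 - M ^ k)⁻¹`, and `(1 - M ^ k)⁻¹` is a Neumann series
  obtain ⟨T, hT⟩ := summable_geometric_of_norm_lt_one hk
  have hT_nonneg : ∀ i j, 0 ≤ T i j := fun i j =>
    (Pi.hasSum.1 (Pi.hasSum.1 hT i) j).nonneg fun m => by
      rw [← pow_mul]; exact pow_apply_nonneg hM _ i j
  have hG : ∀ i j, 0 ≤ (∑ l ∈ range k, M ^ l) i j := fun i j => by
    rw [Matrix.sum_apply]
    exact sum_nonneg fun l _ => pow_apply_nonneg hM l i j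
  refine ⟨(∑ l ∈ range k, M ^ l) * T,
    fun i j => sum_nonneg fun l _ => mul_nonneg (hG i l) (hT_nonneg l j), ?_⟩
  rw [← mul_assoc, mul_neg_geom_sum, ← hT.tsum_eq, mul_neg_geom_series _ hk]

theorem exists_nonneg_one_sub_mul_eq_one {M : Matrix ι ι ℝ} (hM : ∀ i j, 0 ≤ M i j)
    (hspec : ∀ z ∈ spectrum ℂ (M.map Complex.ofReal), ‖z‖ < 1) :
    ∃ S : Matrix ι ι ℝ, (∀ i j, 0 ≤ S i j) ∧ (1 - M) * S = 1 := by
  obtain ⟨k, hk⟩ := (spectrum.eventually_norm_pow_lt_one hspec).exists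
  refine exists_nonneg_one_sub_mul_eq_one_of_norm_pow_lt_one hM (k := k) ?_
  have hpow : (M.map Complex.ofReal) ^ k = (M ^ k).map Complex.ofReal :=
    (map_pow Complex.ofRealHom.mapMatrix M k).symm
  rw [hpow, linfty_opNorm_def] at hk
  rw [linfty_opNorm_def]
  simpa using hk

end Neumann

theorem IsMetzler.eventually_one_add_smul_nonneg {A : Matrix ι ι ℝ} (hA : A.IsMetzler) :
    ∀ᶠ ε : ℝ in 𝓝[>] 0, ∀ i j, 0 ≤ (1 + ε • A) i j := by
  simp only [eventually_all]
  intro i j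
  rcases eq_or_ne i j with rfl | hij
  · have hlim : Tendsto (fun ε : ℝ => 1 + ε * A i i) (𝓝[>] 0) (𝓝 1) := by
      refine tendsto_nhdsWithin_of_tendsto_nhds ?_
      simpa using ((continuous_id.mul (continuous_const (y := A i i))).const_add 1).tendsto 0
    filter_upwards [hlim.eventually_const_lt zero_lt_one] with ε hε
    simpa using hε.le
  · filter_upwards [self_mem_nhdsWithin] with ε (hε : 0 < ε)
    simpa [one_apply_ne hij] using mul_nonneg hε.le (hA i j hij)

theorem IsHurwitz.eventually_norm_spectrum_one_add_smul_lt_one {A : Matrix ι ι ℝ}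
    (hA : A.IsHurwitz) :
    ∀ᶠ ε : ℝ in 𝓝[>] 0, ∀ z ∈ spectrum ℂ ((1 + ε • A).map Complex.ofReal), ‖z‖ < 1 := by
  have hμ : ∀ᶠ ε : ℝ in 𝓝[>] 0, ∀ μ ∈ spectrum ℂ (A.map Complex.ofReal),
      ‖1 + (ε : ℂ) * μ‖ < 1 :=
    (Matrix.finite_spectrum _).eventually_all.2 fun μ hμ =>
      Complex.eventually_norm_one_add_mul_lt_one (hA μ hμ)
  filter_upwards [hμ, self_mem_nhdsWithin] with ε hε (hε0 : 0 < ε)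
  have hmap : (1 + ε • A).map Complex.ofReal = 1 + (ε : ℂ) • A.map Complex.ofReal := by
    ext i j
    rcases eq_or_ne i j with rfl | hij <;> simp [one_apply_ne, *]
  rw [hmap, spectrum.one_add_smul_eq _ (by exact_mod_cast hε0.ne')]
  rintro _ ⟨μ, hμ, rfl⟩
  exact hε μ hμ

theorem IsMetzler.exists_pos_mulVec_neg {A : Matrix ι ι ℝ} (hM : A.IsMetzler)
    (hH : A.IsHurwitz) : ∃ x : ι → ℝ, (∀ i, 0 < x i) ∧ ∀ i, (A *ᵥ x) i < 0 := by
  obtain ⟨ε, ⟨hnonneg, hspec⟩, hε⟩ := ((hM.eventually_one_add_smul_nonneg.and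
    hH.eventually_norm_spectrum_one_add_smul_lt_one).and self_mem_nhdsWithin).exists
  obtain ⟨S, hS, hinv⟩ := exists_nonneg_one_sub_mul_eq_one hnonneg hspec
  have hAS : A * (ε • S) = -1 := by
    rw [sub_add_cancel_left, neg_mul, neg_eq_iff_eq_neg, smul_mul_assoc] at hinv
    rw [mul_smul_comm, hinv]
  have hAx : ∀ i, (A *ᵥ ((ε • S) *ᵥ 1)) i < 0 := fun i => by
    simp [mulVec_mulVec, hAS, neg_mulVec]
  refine ⟨_, hM.pos_of_nonneg_of_mulVec_neg (fun i => ?_) hAx, hAx⟩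
  exact sum_nonneg fun j _ => by simpa using mul_nonneg (le_of_lt hε) (hS i j)

end Matrix

theorem metzler_hurwitz_iff_diag_lyapunov (n : ℕ) (A : Matrix (Fin n) (Fin n) ℝ)
    (hMetzler : ∀ i j, i ≠ j → 0 ≤ A i j) :
    (∀ μ ∈ spectrum ℂ (A.map Complex.ofReal), μ.re < 0) ↔
    (∃ d : Fin n → ℝ, (∀ i, 0 < d i) ∧
      (-(Aᵀ * Matrix.diagonal d + Matrix.diagonal d * A)).PosDef) := by
  have hM : A.IsMetzler := hMetzler
  change A.IsHurwitz ↔ _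
  refine ⟨fun hH => ?_, fun ⟨d, hd, hQ⟩ => isHurwitz_of_posDef_lyapunov (PosDef.diagonal hd) hQ⟩
  obtain ⟨x, hx, hAx⟩ := hM.exists_pos_mulVec_neg hH
  obtain ⟨y, hy, hAy⟩ := hM.transpose.exists_pos_mulVec_neg hH.transpose
  exact ⟨y / x, fun i => div_pos (hy i) (hx i), hM.posDef_neg_lyapunov_diagonal hx hAx hy hAy⟩
end

section
/- If diagonal positive definite P, Q satisfy A^T P + P A + Q + P B Q^{-1} B^T P ≺ 0, then both A^T P + P A ≺ 0 and (A+B)^T P + P (A+B) ≺ 0. -/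
/-! With `X = P B`, the negated Riccati matrix differs from `-(AᵀP + PA)` by
`Q + X Q⁻¹ Xᵀ ⪰ 0`, and from `-((A+B)ᵀP + P(A+B))` by
`Q - X - Xᵀ + X Q⁻¹ Xᵀ = (X - Q) Q⁻¹ (X - Q)ᵀ ⪰ 0`; adding a positive semidefinite matrix
to a positive definite one keeps it positive definite. -/

open Matrix

namespace Matrix.PosDef

variable {n K : Type*} [Fintype n] [DecidableEq n] [Field K] [PartialOrder K] [StarRing K]
  {Q : Matrix n n K}

theorem posSemidef_add_mul_inv_mul_conjTranspose [AddLeftMono K] (hQ : Q.PosDef) (X : Matrix n n K) :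
    (Q + X * Q⁻¹ * Xᴴ).PosSemidef :=
  hQ.posSemidef.add (hQ.inv.posSemidef.mul_mul_conjTranspose_same X)

theorem sub_mul_inv_mul_conjTranspose_sub (hQ : Q.PosDef) (X : Matrix n n K) :
    (X - Q) * Q⁻¹ * (X - Q)ᴴ = Q - X - Xᴴ + X * Q⁻¹ * Xᴴ := by
  have hdet : IsUnit Q.det := (isUnit_iff_isUnit_det Q).mp hQ.isUnit
  have hQQ : Q * Q⁻¹ = 1 := mul_nonsing_inv Q hdet
  have hQQ' : Q⁻¹ * Q = 1 := nonsing_inv_mul Q hdet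
  rw [conjTranspose_sub, hQ.isHermitian.eq]
  simp only [sub_mul, mul_sub, hQQ, one_mul, mul_assoc, hQQ', mul_one]
  abel

theorem posSemidef_sub_sub_add_mul_inv_mul_conjTranspose (hQ : Q.PosDef) (X : Matrix n n K) :
    (Q - X - Xᴴ + X * Q⁻¹ * Xᴴ).PosSemidef :=
  hQ.sub_mul_inv_mul_conjTranspose_sub X ▸ hQ.inv.posSemidef.mul_mul_conjTranspose_same (X - Q)

end Matrix.PosDef

theorem riccati_implies_lyapunov_general (n : ℕ) (A B : Matrix (Fin n) (Fin n) ℝ)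
    (p q : Fin n → ℝ) (hq : ∀ i, 0 < q i)
    (hRic : (-(Aᵀ * Matrix.diagonal p + Matrix.diagonal p * A + Matrix.diagonal q +
        Matrix.diagonal p * B * (Matrix.diagonal q)⁻¹ * Bᵀ * Matrix.diagonal p)).PosDef) :
    (-(Aᵀ * Matrix.diagonal p + Matrix.diagonal p * A)).PosDef ∧
    (-((A + B)ᵀ * Matrix.diagonal p + Matrix.diagonal p * (A + B))).PosDef := by
  have hQ : (diagonal q).PosDef := PosDef.diagonal hq
  have hPB : (diagonal p * B)ᴴ = Bᵀ * diagonal p := by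
    rw [conjTranspose_eq_transpose_of_trivial, transpose_mul, diagonal_transpose]
  constructor
  · have h := hRic.add_posSemidef (hQ.posSemidef_add_mul_inv_mul_conjTranspose (diagonal p * B))
    rw [hPB] at h
    convert h using 1
    noncomm_ring
  · have h := hRic.add_posSemidef
      (hQ.posSemidef_sub_sub_add_mul_inv_mul_conjTranspose (diagonal p * B))
    rw [hPB] at h
    convert h using 1
    rw [transpose_add]
    noncomm_ring

theorem riccati_implies_lyapunov (n : ℕ) (A B : Matrix (Fin n) (Fin n) ℝ)
    (p q : Fin n → ℝ) (hp : ∀ i, 0 < p i) (hq : ∀ i, 0 < q i)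
    (hRic : (-(Aᵀ * Matrix.diagonal p + Matrix.diagonal p * A + Matrix.diagonal q +
        Matrix.diagonal p * B * (Matrix.diagonal q)⁻¹ * Bᵀ * Matrix.diagonal p)).PosDef) :
    (-(Aᵀ * Matrix.diagonal p + Matrix.diagonal p * A)).PosDef ∧
    (-((A + B)ᵀ * Matrix.diagonal p + Matrix.diagonal p * (A + B))).PosDef :=
  riccati_implies_lyapunov_general n A B p q hq hRic
end

section
/- For the 2×2 matrices A = [[-1,0],[-2,-1]] and B = [[-10,0],[0,-10]], there do not exist diagonal positive definite 2×2 matrices P, Q with A^T P + P A + Q + P B Q^{-1} B^T P ≺ 0, even though D = diag(4,1) satisfies A^T D + D A ≺ 0 and (A+B)^T D + D (A+B) ≺ 0. -/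
/-!
The `(i, i)` entry of the diagonal Riccati matrix is
`2 aᵢᵢ pᵢ + qᵢ + pᵢ² ∑ₖ bᵢₖ² / qₖ ≥ 2 aᵢᵢ pᵢ + qᵢ + pᵢ² bᵢᵢ² / qᵢ ≥ 2 pᵢ (aᵢᵢ + |bᵢᵢ|)`
by AM-GM, so diagonal Riccati stability forces `aᵢᵢ + |bᵢᵢ| < 0` for every `i`.
In the example `a₀₀ + |b₀₀| = -1 + 10 > 0`. The two Lyapunov matrices for `D` are explicit
`2 × 2` matrices, positive definite by the leading-minor criterion.
-/

open Matrix

section DiagonalRiccati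

variable {n : Type*} [Fintype n] [DecidableEq n]

theorem inv_diagonal_of_ne_zero {K : Type*} [Field K] {q : n → K} (hq : ∀ i, q i ≠ 0) :
    (diagonal q)⁻¹ = diagonal q⁻¹ := by
  refine inv_eq_right_inv ?_
  rw [diagonal_mul_diagonal, ← diagonal_one]
  exact congrArg diagonal (funext fun i => mul_inv_cancel₀ (hq i))

noncomputable def diagRiccati (A B : Matrix n n ℝ) (p q : n → ℝ) : Matrix n n ℝ :=
  Aᵀ * diagonal p + diagonal p * A + diagonal q +
    diagonal p * B * (diagonal q)⁻¹ * Bᵀ * diagonal p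

theorem diagRiccati_apply_self (A B : Matrix n n ℝ) {p q : n → ℝ} (hq : ∀ i, q i ≠ 0) (i : n) :
    diagRiccati A B p q i i = 2 * A i i * p i + q i + p i ^ 2 * ∑ k, B i k ^ 2 / q k := by
  simp only [diagRiccati, inv_diagonal_of_ne_zero hq, Matrix.add_apply, mul_diagonal,
    diagonal_mul, transpose_apply, diagonal_apply_eq]
  rw [mul_apply, Finset.sum_mul, Finset.mul_sum]
  simp only [mul_diagonal, diagonal_mul, transpose_apply, Pi.inv_apply]
  ring_nf

theorem two_mul_mul_abs_le_add_sq_div {p q b : ℝ} (hq : 0 < q) :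
    2 * p * |b| ≤ q + p ^ 2 * (b ^ 2 / q) := by
  have hmul : q * (q + p ^ 2 * (b ^ 2 / q)) = q ^ 2 + (p * |b|) ^ 2 := by
    rw [mul_pow, sq_abs]
    field_simp
  nlinarith [sq_nonneg (q - p * |b|)]

theorem add_abs_diag_neg_of_posDef_neg_diagRiccati (A B : Matrix n n ℝ) {p q : n → ℝ}
    (hp : ∀ i, 0 < p i) (hq : ∀ i, 0 < q i) (h : (-diagRiccati A B p q).PosDef) (i : n) :
    A i i + |B i i| < 0 := by
  have hneg := h.diag_pos (i := i)
  rw [neg_apply, diagRiccati_apply_self A B (fun k => (hq k).ne') i, neg_pos] at hneg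
  have hterm : B i i ^ 2 / q i ≤ ∑ k, B i k ^ 2 / q k :=
    Finset.single_le_sum (f := fun k => B i k ^ 2 / q k)
      (fun k _ => div_nonneg (sq_nonneg _) (hq k).le) (Finset.mem_univ i)
  have hamgm := two_mul_mul_abs_le_add_sq_div (p := p i) (b := B i i) (hq i)
  nlinarith [mul_le_mul_of_nonneg_left hterm (sq_nonneg (p i)), hp i]

end DiagonalRiccati

theorem posDef_fin_two {a b c : ℝ} (ha : 0 < a) (hdet : 0 < a * c - b ^ 2) :
    (!![a, b; b, c] : Matrix (Fin 2) (Fin 2) ℝ).PosDef := by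
  rw [posDef_iff_dotProduct_mulVec]
  refine ⟨by ext i j; fin_cases i <;> fin_cases j <;> rfl, fun x hx => ?_⟩
  have hquad : a * (star x ⬝ᵥ (!![a, b; b, c] *ᵥ x)) =
      (a * x 0 + b * x 1) ^ 2 + (a * c - b ^ 2) * x 1 ^ 2 := by
    simp [dotProduct, Fin.sum_univ_two]
    ring
  refine pos_of_mul_pos_right (hquad ▸ ?_) ha.le
  rcases eq_or_ne (x 1) 0 with h1 | h1
  · have h0 : x 0 ≠ 0 := fun h0 => hx (funext fun i => by fin_cases i <;> simp [h0, h1])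
    simpa [h1] using (by positivity : 0 < (a * x 0) ^ 2)
  · positivity

theorem counterexample_not_diag_riccati :
    let A : Matrix (Fin 2) (Fin 2) ℝ := !![-1, 0; -2, -1]
    let B : Matrix (Fin 2) (Fin 2) ℝ := !![-10, 0; 0, -10]
    let D : Matrix (Fin 2) (Fin 2) ℝ := Matrix.diagonal ![4, 1]
    (¬ ∃ p q : Fin 2 → ℝ, (∀ i, 0 < p i) ∧ (∀ i, 0 < q i) ∧
      (-(Aᵀ * Matrix.diagonal p + Matrix.diagonal p * A + Matrix.diagonal q +
        Matrix.diagonal p * B * (Matrix.diagonal q)⁻¹ * Bᵀ * Matrix.diagonal p)).PosDef) ∧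
    (-(Aᵀ * D + D * A)).PosDef ∧
    (-((A + B)ᵀ * D + D * (A + B))).PosDef := by
  intro A B D
  refine ⟨?_, ?_, ?_⟩
  · rintro ⟨p, q, hp, hq, hriccati⟩
    have := add_abs_diag_neg_of_posDef_neg_diagRiccati A B hp hq hriccati 0
    norm_num [A, B] at this
  · have hlyap : -(Aᵀ * D + D * A) = !![8, 2; 2, 2] := by
      ext i j; fin_cases i <;> fin_cases j <;> norm_num [A, D, mul_apply, Fin.sum_univ_two]
    rw [hlyap]
    exact posDef_fin_two (by norm_num) (by norm_num)
  · have hlyap : -((A + B)ᵀ * D + D * (A + B)) = !![88, 2; 2, 22] := by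
      ext i j; fin_cases i <;> fin_cases j <;> norm_num [A, B, D, mul_apply, Fin.sum_univ_two]
    rw [hlyap]
    exact posDef_fin_two (by norm_num) (by norm_num)
end

section
/- Let A, B ∈ ℝ^{n×n} be lower triangular with A Hurwitz and |b_{ii}| < |a_{ii}| for all i. Then there exist diagonal positive definite matrices P, Q with A^T P + P A + Q + P B Q^{-1} B^T P ≺ 0. -/
/-!
Let `s i = -A i i`, `E = diagonal (η ^ i)`, `P = E²` and `Q = E S E` with `S = diagonal s`.
Conjugation by `E` turns the Riccati matrix into `E R(η) E`, where `R(η)` is the Riccati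
expression of `E A E⁻¹`, `E B E⁻¹` with weights `1` and `S`. As `A`, `B` are lower triangular,
these conjugates tend to the diagonal parts of `A`, `B` as `η → 0`, so `-R(η)` tends to
`diagonal (s i - B i i ^ 2 / s i)`, which is positive because `|B i i| < |A i i|`. For small
`η > 0`, `-R(η)` is therefore strictly diagonally dominant, hence positive definite by
Gershgorin's theorem, and so is its congruent `-E R(η) E`.
-/

open Filter Topology Finset

namespace Matrix

variable {n K : Type*} [Fintype n] [DecidableEq n] [Field K]

theorem posDef_of_sum_abs_lt_diag {M : Matrix n n ℝ} (hM : M.IsHermitian)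
    (h : ∀ i, ∑ j ∈ univ.erase i, |M i j| < M i i) : M.PosDef := by
  refine hM.posDef_iff_eigenvalues_pos.mpr fun i => ?_
  have hμ : Module.End.HasEigenvalue (toLin' M) (hM.eigenvalues i) := by
    rw [Module.End.hasEigenvalue_iff_mem_spectrum, spectrum_toLin']
    exact hM.eigenvalues_mem_spectrum_real i
  obtain ⟨k, hk⟩ := eigenvalue_mem_ball hμ
  rw [Metric.mem_closedBall, Real.dist_eq] at hk
  simp only [Real.norm_eq_abs] at hk
  linarith [h k, neg_abs_le (hM.eigenvalues i - M k k)]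

theorem eventually_sum_abs_lt_diag {α : Type*} {l : Filter α} {M : α → Matrix n n ℝ}
    {d : n → ℝ} (hM : Tendsto M l (𝓝 (diagonal d))) (hd : ∀ i, 0 < d i) :
    ∀ᶠ x in l, ∀ i, ∑ j ∈ univ.erase i, |M x i j| < M x i i := by
  refine eventually_all.mpr fun i => ?_
  have hentry : ∀ j, Tendsto (fun x => M x i j) l (𝓝 (diagonal d i j)) := fun j =>
    ((continuous_id.matrix_elem i j).tendsto _).comp hM
  refine (tendsto_finsetSum (univ.erase i) fun j _ => (hentry j).abs).eventually_lt
    (hentry i) ?_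
  rw [sum_eq_zero fun j hj => by simp [diagonal_apply_ne _ (ne_of_mem_erase hj).symm]]
  simpa using hd i

theorem PosDef.diagonal_mul_mul_diagonal {M : Matrix n n ℝ} (hM : M.PosDef) {w : n → ℝ}
    (hw : ∀ i, w i ≠ 0) : (diagonal w * M * diagonal w).PosDef := by
  have hinj : Function.Injective (diagonal w).mulVec := mulVec_injective_iff_isUnit.mpr <|
    isUnit_diagonal.mpr (Pi.isUnit_iff.mpr fun i => (hw i).isUnit)
  simpa [diagonal_conjTranspose] using hM.conjTranspose_mul_mul_same hinj

theorem diag_mem_spectrum_of_isLowerTriangular [LinearOrder n] {M : Matrix n n K}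
    (hM : M.IsLowerTriangular) (i : n) : M i i ∈ spectrum K M := by
  have hsub : (algebraMap K (Matrix n n K) (M i i) - M).IsLowerTriangular := fun a b hab => by
    simp [algebraMap_matrix_apply, hM hab, (OrderDual.toDual_lt_toDual.mp hab).ne]
  rw [spectrum.mem_iff, isUnit_iff_isUnit_det, det_of_isLowerTriangular _ hsub]
  exact fun hu => hu.ne_zero (prod_eq_zero (mem_univ i) (by simp [algebraMap_matrix_apply]))

theorem diag_neg_of_isLowerTriangular_of_re_neg [LinearOrder n] {A : Matrix n n ℝ}
    (hA : A.IsLowerTriangular) (h : ∀ μ ∈ spectrum ℂ (A.map Complex.ofReal), μ.re < 0)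
    (i : n) : A i i < 0 := by
  simpa using h _ (diag_mem_spectrum_of_isLowerTriangular (M := A.map Complex.ofReal)
    (fun a b hab => by simp [hA hab]) i)

theorem inv_diagonal_of_ne_zero {s : n → K} (hs : ∀ i, s i ≠ 0) :
    (diagonal s)⁻¹ = diagonal s⁻¹ :=
  inv_eq_left_inv <| by
    rw [diagonal_mul_diagonal, ← diagonal_one]
    exact congrArg diagonal (funext fun i => inv_mul_cancel₀ (hs i))

noncomputable def riccati (A B P Q : Matrix n n K) : Matrix n n K :=
  Aᵀ * P + P * A + Q + P * B * Q⁻¹ * Bᵀ * P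

theorem isHermitian_riccati (A B : Matrix n n ℝ) {P Q : Matrix n n ℝ} (hP : P.IsHermitian)
    (hQ : Q.IsHermitian) : (riccati A B P Q).IsHermitian := by
  have hPT : Pᵀ = P := by simpa using hP.eq
  have hPA : (Aᵀ * P + P * A).IsHermitian := by
    simpa [add_comm, hPT] using isHermitian_add_transpose_self (P * A)
  have hPB := isHermitian_mul_mul_conjTranspose (P * B) hQ.inv
  exact (hPA.add hQ).add (by simpa [mul_assoc, hPT] using hPB)

theorem riccati_diagonal (a b : n → K) {s : n → K} (hs : ∀ i, s i ≠ 0) :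
    riccati (diagonal a) (diagonal b) 1 (diagonal s) =
      diagonal fun i => 2 * a i + s i + b i ^ 2 / s i := by
  simp only [riccati, inv_diagonal_of_ne_zero hs, diagonal_transpose, mul_one, one_mul,
    diagonal_mul_diagonal, diagonal_add]
  congr 1
  funext i
  simp only [Pi.inv_apply]
  ring

theorem riccati_diagonal_sq_eq {w s : n → K} (hw : ∀ i, w i ≠ 0) (hs : ∀ i, s i ≠ 0)
    {A B A' B' : Matrix n n K} (hA : diagonal w * A = A' * diagonal w)
    (hB : diagonal w * B = B' * diagonal w) :
    riccati A B (diagonal (w ^ 2)) (diagonal (s * w ^ 2)) =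
      diagonal w * riccati A' B' 1 (diagonal s) * diagonal w := by
  set E := diagonal w
  set F := diagonal w⁻¹
  set S := diagonal s
  have hEF : E * F = 1 := by
    rw [diagonal_mul_diagonal, ← diagonal_one]
    exact congrArg diagonal (funext fun i => mul_inv_cancel₀ (hw i))
  have hP : diagonal (w ^ 2) = E * E := by rw [diagonal_mul_diagonal, sq]; rfl
  have hQ : diagonal (s * w ^ 2) = E * S * E := by
    simp only [E, S, diagonal_mul_diagonal]
    congr 1; funext i; simp only [Pi.mul_apply, Pi.pow_apply]; ring
  have hQinv : (diagonal (s * w ^ 2))⁻¹ = F * S⁻¹ * F := by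
    have hsw : ∀ i, (s * w ^ 2) i ≠ 0 := fun i => mul_ne_zero (hs i) (pow_ne_zero 2 (hw i))
    simp only [F, S, inv_diagonal_of_ne_zero hsw, inv_diagonal_of_ne_zero hs,
      diagonal_mul_diagonal]
    congr 1; funext i; simp only [Pi.mul_apply, Pi.pow_apply, Pi.inv_apply]; ring
  have hET : Eᵀ = E := diagonal_transpose _
  have hFT : Fᵀ = F := diagonal_transpose _
  have hAE : Aᵀ * (E * E) = E * A'ᵀ * E := by
    rw [← mul_assoc, ← hET, ← transpose_mul, hA, transpose_mul, hET]
  have hEA : E * E * A = E * A' * E := by rw [mul_assoc, hA, mul_assoc]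
  have hEBF : E * E * B * F = E * B' := by
    rw [mul_assoc E, hB, mul_assoc, mul_assoc, hEF, mul_one]
  have hFBE : F * Bᵀ * (E * E) = B'ᵀ * E := by
    rw [← hFT, ← hET, ← transpose_mul, ← transpose_mul, ← transpose_mul, ← mul_assoc,
      hEBF, transpose_mul, hET]
  calc riccati A B (diagonal (w ^ 2)) (diagonal (s * w ^ 2))
      = Aᵀ * (E * E) + E * E * A + E * S * E +
          (E * E * B * F) * S⁻¹ * (F * Bᵀ * (E * E)) := by
        rw [riccati, hP, hQinv, hQ]; simp only [mul_assoc]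
    _ = E * A'ᵀ * E + E * A' * E + E * S * E + E * B' * S⁻¹ * (B'ᵀ * E) := by
        rw [hAE, hEA, hEBF, hFBE]
    _ = E * riccati A' B' 1 S * E := by
        simp only [riccati, mul_one, one_mul, mul_add, add_mul, mul_assoc]

section GeometricScaling

variable {m : ℕ}

/-- `E * A * E⁻¹` for `E = diagonal (η ^ i)` and lower triangular `A`
(`diagonal_pow_mul_of_isLowerTriangular`), written so that it is continuous at `η = 0`. -/
def geomConj (η : ℝ) (A : Matrix (Fin m) (Fin m) ℝ) : Matrix (Fin m) (Fin m) ℝ :=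
  of fun i j => η ^ ((i : ℕ) - j) * A i j

theorem diagonal_pow_mul_of_isLowerTriangular {A : Matrix (Fin m) (Fin m) ℝ}
    (hA : A.IsLowerTriangular) (η : ℝ) :
    diagonal (fun i : Fin m => η ^ (i : ℕ)) * A =
      geomConj η A * diagonal (fun i : Fin m => η ^ (i : ℕ)) := by
  ext i j
  rw [diagonal_mul, mul_diagonal, geomConj, of_apply]
  rcases le_or_gt j i with hji | hij
  · rw [mul_right_comm, ← pow_add, Nat.sub_add_cancel (Fin.le_iff_val_le_val.mp hji)]
  · simp [hA hij]

theorem continuous_geomConj (A : Matrix (Fin m) (Fin m) ℝ) :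
    Continuous fun η => geomConj η A :=
  continuous_pi fun _ => continuous_pi fun _ => by unfold geomConj; fun_prop

theorem geomConj_zero {A : Matrix (Fin m) (Fin m) ℝ} (hA : A.IsLowerTriangular) :
    geomConj 0 A = diagonal A.diag := by
  ext i j
  rcases lt_trichotomy i j with hij | rfl | hji
  · simp [geomConj, hA hij, hij.ne]
  · simp [geomConj]
  · simp [geomConj, hji.ne', Nat.sub_ne_zero_of_lt (Fin.lt_def.mp hji)]

theorem tendsto_riccati_geomConj {A B : Matrix (Fin m) (Fin m) ℝ} (hA : A.IsLowerTriangular)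
    (hB : B.IsLowerTriangular) {s : Fin m → ℝ} (hs : ∀ i, s i ≠ 0) :
    Tendsto (fun η => riccati (geomConj η A) (geomConj η B) 1 (diagonal s)) (𝓝 0)
      (𝓝 (diagonal fun i => 2 * A i i + s i + B i i ^ 2 / s i)) := by
  have hcont : Continuous fun η => riccati (geomConj η A) (geomConj η B) 1 (diagonal s) := by
    have := continuous_geomConj A
    have := continuous_geomConj B
    unfold riccati
    fun_prop
  simpa [geomConj_zero hA, geomConj_zero hB, riccati_diagonal _ _ hs] using hcont.tendsto 0

end GeometricScaling

end Matrix

open Matrix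

theorem lower_triangular_riccati_sufficient (n : ℕ) (A B : Matrix (Fin n) (Fin n) ℝ)
    (hA : ∀ i j : Fin n, i < j → A i j = 0) (hB : ∀ i j : Fin n, i < j → B i j = 0)
    (hHurwitz : ∀ μ ∈ spectrum ℂ (A.map Complex.ofReal), μ.re < 0)
    (hdiag : ∀ i : Fin n, |B i i| < |A i i|) :
    ∃ p q : Fin n → ℝ, (∀ i, 0 < p i) ∧ (∀ i, 0 < q i) ∧
      (-(Aᵀ * Matrix.diagonal p + Matrix.diagonal p * A + Matrix.diagonal q +
        Matrix.diagonal p * B * (Matrix.diagonal q)⁻¹ * Bᵀ * Matrix.diagonal p)).PosDef := by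
  have hAl : A.IsLowerTriangular := fun i j h => hA i j h
  have hBl : B.IsLowerTriangular := fun i j h => hB i j h
  have hAneg := diag_neg_of_isLowerTriangular_of_re_neg hAl hHurwitz
  set s : Fin n → ℝ := fun i => -A i i
  have hs : ∀ i, 0 < s i := fun i => neg_pos.mpr (hAneg i)
  have hgap : ∀ i, 0 < -(2 * A i i + s i + B i i ^ 2 / s i) := fun i => by
    have : B i i ^ 2 < s i ^ 2 := by
      simpa [s, abs_of_neg (hAneg i)] using sq_lt_sq.mpr (hdiag i)
    have : B i i ^ 2 / s i < s i := by rw [div_lt_iff₀ (hs i)]; nlinarith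
    linarith [show s i = -A i i from rfl]
  have hlim := ((tendsto_riccati_geomConj hAl hBl fun i => (hs i).ne').neg).mono_left
    (nhdsWithin_le_nhds (s := Set.Ioi 0))
  rw [diagonal_neg] at hlim
  obtain ⟨η, hdom, hη⟩ :=
    ((eventually_sum_abs_lt_diag hlim hgap).and self_mem_nhdsWithin).exists
  set w : Fin n → ℝ := fun i => η ^ (i : ℕ)
  have hw : ∀ i, 0 < w i := fun i => pow_pos hη _
  refine ⟨w ^ 2, s * w ^ 2, fun i => pow_pos (hw i) 2,
    fun i => mul_pos (hs i) (pow_pos (hw i) 2), ?_⟩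
  change (-riccati A B (diagonal (w ^ 2)) (diagonal (s * w ^ 2))).PosDef
  rw [riccati_diagonal_sq_eq (fun i => (hw i).ne') (fun i => (hs i).ne')
    (diagonal_pow_mul_of_isLowerTriangular hAl η) (diagonal_pow_mul_of_isLowerTriangular hBl η),
    ← neg_mul, ← mul_neg]
  exact (posDef_of_sum_abs_lt_diag ((isHermitian_riccati _ _ isHermitian_one
    (isHermitian_diagonal s)).neg) hdom).diagonal_mul_mul_diagonal fun i => (hw i).ne'
end

section
/- Let M be a symmetric real n×n Metzler matrix. If there exists a vector v with all entries positive such that M v has all entries negative, then M is negative definite. -/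
/-!
Write `x = v * y` entrywise. Symmetry of `M` gives
`2 xᵀ M x = 2 ∑ᵢ (M v)ᵢ vᵢ yᵢ² - ∑ᵢⱼ Mᵢⱼ vᵢ vⱼ (yᵢ - yⱼ)²`.
For `y ≠ 0` the first sum is negative because `M v ≪ 0` and `v ≫ 0`, while the second is
nonnegative because only off-diagonal entries of `M` contribute to it.
-/

namespace Matrix.IsSymm

variable {ι R : Type*} [Fintype ι]

theorem two_mul_dotProduct_mulVec_mul [CommRing R] {M : Matrix ι ι R}
    (hM : M.IsSymm) (v y : ι → R) :
    2 * ((v * y) ⬝ᵥ M *ᵥ (v * y)) =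
      2 * ∑ i, (M *ᵥ v) i * v i * y i ^ 2 - ∑ i, ∑ j, M i j * v i * v j * (y i - y j) ^ 2 := by
  have hswap : ∑ i, ∑ j, M i j * v i * v j * y j ^ 2 = ∑ i, (M *ᵥ v) i * v i * y i ^ 2 := by
    rw [Finset.sum_comm]
    refine Finset.sum_congr rfl fun i _ => ?_
    simp only [mulVec, dotProduct, Finset.sum_mul]
    refine Finset.sum_congr rfl fun j _ => ?_
    rw [hM.apply i j]
  have hdiag : ∑ i, ∑ j, M i j * v i * v j * y i ^ 2 = ∑ i, (M *ᵥ v) i * v i * y i ^ 2 := by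
    refine Finset.sum_congr rfl fun i _ => ?_
    simp only [mulVec, dotProduct, Finset.sum_mul]
    refine Finset.sum_congr rfl fun j _ => ?_
    ring
  have hcross : (v * y) ⬝ᵥ M *ᵥ (v * y) = ∑ i, ∑ j, M i j * v i * v j * (y i * y j) := by
    simp only [dotProduct, mulVec, Finset.mul_sum, Pi.mul_apply]
    refine Finset.sum_congr rfl fun i _ => Finset.sum_congr rfl fun j _ => ?_
    ring
  have hexpand : ∑ i, ∑ j, M i j * v i * v j * (y i - y j) ^ 2 =
      ∑ i, ∑ j, M i j * v i * v j * y i ^ 2 + ∑ i, ∑ j, M i j * v i * v j * y j ^ 2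
        - 2 * ∑ i, ∑ j, M i j * v i * v j * (y i * y j) := by
    simp only [Finset.mul_sum, ← Finset.sum_add_distrib, ← Finset.sum_sub_distrib]
    refine Finset.sum_congr rfl fun i _ => Finset.sum_congr rfl fun j _ => ?_
    ring
  rw [hexpand, hdiag, hswap, hcross]
  ring

theorem dotProduct_mulVec_neg_of_metzler [Field R] [LinearOrder R]
    [IsStrictOrderedRing R] {M : Matrix ι ι R} (hM : M.IsSymm)
    (hMetzler : ∀ i j, i ≠ j → 0 ≤ M i j) {v : ι → R} (hv : ∀ i, 0 < v i)
    (hMv : ∀ i, (M *ᵥ v) i < 0) {x : ι → R} (hx : x ≠ 0) :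
    x ⬝ᵥ M *ᵥ x < 0 := by
  set y : ι → R := fun i => x i / v i
  have hxy : x = v * y := funext fun i => (mul_div_cancel₀ (x i) (hv i).ne').symm
  obtain ⟨k, hk⟩ : ∃ k, y k ≠ 0 := by
    by_contra! h
    exact hx (hxy.trans (by ext i; simp [h i]))
  have hdiag : ∑ i, (M *ᵥ v) i * v i * y i ^ 2 < 0 := by
    refine Finset.sum_neg' (fun i _ => ?_) ⟨k, Finset.mem_univ k, ?_⟩
    · exact mul_nonpos_of_nonpos_of_nonneg
        (mul_nonpos_of_nonpos_of_nonneg (hMv i).le (hv i).le) (sq_nonneg _)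
    · exact mul_neg_of_neg_of_pos (mul_neg_of_neg_of_pos (hMv k) (hv k)) (by positivity)
  have hoff : 0 ≤ ∑ i, ∑ j, M i j * v i * v j * (y i - y j) ^ 2 := by
    refine Finset.sum_nonneg fun i _ => Finset.sum_nonneg fun j _ => ?_
    rcases eq_or_ne i j with rfl | hij
    · simp
    · exact mul_nonneg (mul_nonneg (mul_nonneg (hMetzler i j hij) (hv i).le) (hv j).le)
        (sq_nonneg _)
  have hidentity := hM.two_mul_dotProduct_mulVec_mul v y
  rw [hxy]
  linarith

end Matrix.IsSymm

open Matrix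

theorem symm_metzler_pos_vec_negdef (n : ℕ) (M : Matrix (Fin n) (Fin n) ℝ)
    (hSymm : M.IsSymm) (hMetzler : ∀ i j, i ≠ j → 0 ≤ M i j)
    (v : Fin n → ℝ) (hv : ∀ i, 0 < v i) (hMv : ∀ i, (M.mulVec v) i < 0) :
    (-M).PosDef := by
  refine posDef_iff_dotProduct_mulVec.mpr ⟨?_, fun x hx => ?_⟩
  · exact isHermitian_iff_isSymm.mpr hSymm.neg
  · simpa [neg_mulVec] using hSymm.dotProduct_mulVec_neg_of_metzler hMetzler hv hMv hx
end

section
/- Let C1, C2 be non-empty convex subsets of a finite-dimensional real inner product space E with C2 a cone and C1 ∩ C2 = ∅. Then there exists a non-zero v ∈ E such that ⟨v, x⟩ ≥ 0 for all x ∈ C1 and ⟨v, x⟩ ≤ 0 for all x ∈ C2. -/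
/-!
Separate `0` from the convex set `C1 - C2`, which avoids it by disjointness: when `C1 - C2` has
interior this is Hahn–Banach, otherwise it lies in an affine hyperplane and a functional vanishing
on its direction works. The resulting `f` satisfies `f y ≤ f x` for `x ∈ C1`, `y ∈ C2`; replacing
`y` by `t • y` and letting `t → ∞`, resp. `t → 0`, gives `f ≤ 0` on `C2` and `f ≥ 0` on `C1`.
-/

open Filter Topology

lemma nonpos_of_forall_pos_mul_le {a b : ℝ} (h : ∀ t : ℝ, 0 < t → t * a ≤ b) : a ≤ 0 := by
  by_contra! ha
  have hb := h ((|b| + 1) / a) (by positivity)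
  rw [div_mul_cancel₀ _ ha.ne'] at hb
  linarith [le_abs_self b]

lemma nonneg_of_forall_pos_mul_le {a b : ℝ} (h : ∀ t : ℝ, 0 < t → t * a ≤ b) : 0 ≤ b := by
  have hlim : Tendsto (fun t : ℝ => t * a) (𝓝[>] 0) (𝓝 0) :=
    ((continuous_mul_const a).tendsto' 0 0 (zero_mul a)).mono_left nhdsWithin_le_nhds
  exact le_of_tendsto hlim (eventually_nhdsWithin_of_forall h)

section FiniteDimensional

variable {E : Type*} [NormedAddCommGroup E] [NormedSpace ℝ E] [FiniteDimensional ℝ E]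

lemma exists_dual_ne_zero_eqOn_of_affineSpan_ne_top {s : Set E} {a : E} (ha : a ∈ s)
    (hs : affineSpan ℝ s ≠ ⊤) : ∃ f : StrongDual ℝ E, f ≠ 0 ∧ ∀ x ∈ s, f x = f a := by
  rw [Ne, AffineSubspace.affineSpan_eq_top_iff_vectorSpan_eq_top_of_nonempty ℝ E E ⟨a, ha⟩] at hs
  obtain ⟨f, hf, hker⟩ := (vectorSpan ℝ s).exists_le_ker_of_lt_top (lt_top_iff_ne_top.2 hs)
  refine ⟨LinearMap.toContinuousLinearMap f, by simpa using hf, fun x hx => ?_⟩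
  have hsub : f (x - a) = 0 := hker (vsub_mem_vectorSpan ℝ hx ha)
  simpa [sub_eq_zero] using hsub

lemma exists_dual_ne_zero_nonneg_of_zero_notMem {s : Set E} (hs : Convex ℝ s) (hne : s.Nonempty)
    (h0 : (0 : E) ∉ s) : ∃ f : StrongDual ℝ E, f ≠ 0 ∧ ∀ x ∈ s, 0 ≤ f x := by
  by_cases hint : (interior s).Nonempty
  · obtain ⟨f, hf, hle⟩ := geometric_hahn_banach_of_nonempty_interior_point hs
      (fun h => h0 (interior_subset h)) hint
    exact ⟨-f, neg_ne_zero.2 hf, fun x hx => by simpa using hle x hx⟩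
  · obtain ⟨a, ha⟩ := hne
    rw [hs.interior_nonempty_iff_affineSpan_eq_top] at hint
    obtain ⟨f, hf, hconst⟩ := exists_dual_ne_zero_eqOn_of_affineSpan_ne_top ha hint
    rcases le_total 0 (f a) with hfa | hfa
    · exact ⟨f, hf, fun x hx => hconst x hx ▸ hfa⟩
    · exact ⟨-f, neg_ne_zero.2 hf, fun x hx => by simpa [hconst x hx] using hfa⟩

theorem exists_dual_separating_convex_cone {C1 C2 : Set E} (hC1 : Convex ℝ C1)
    (hC2 : Convex ℝ C2) (hC1ne : C1.Nonempty) (hC2ne : C2.Nonempty)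
    (hcone : ∀ x ∈ C2, ∀ t : ℝ, 0 < t → t • x ∈ C2) (hdisj : Disjoint C1 C2) :
    ∃ f : StrongDual ℝ E, f ≠ 0 ∧ (∀ x ∈ C1, 0 ≤ f x) ∧ ∀ y ∈ C2, f y ≤ 0 := by
  obtain ⟨f, hf, hsub⟩ := exists_dual_ne_zero_nonneg_of_zero_notMem (hC1.sub hC2)
    (hC1ne.sub hC2ne) hdisj.zero_notMem_sub_set
  have hscaled : ∀ x ∈ C1, ∀ y ∈ C2, ∀ t : ℝ, 0 < t → t * f y ≤ f x := fun x hx y hy t ht => by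
    simpa [sub_nonneg] using hsub _ (Set.sub_mem_sub hx (hcone y hy t ht))
  obtain ⟨x₀, hx₀⟩ := hC1ne
  obtain ⟨y₀, hy₀⟩ := hC2ne
  exact ⟨f, hf, fun x hx => nonneg_of_forall_pos_mul_le (hscaled x hx y₀ hy₀),
    fun y hy => nonpos_of_forall_pos_mul_le (hscaled x₀ hx₀ y hy)⟩

end FiniteDimensional

theorem convex_cone_separation {E : Type*} [NormedAddCommGroup E]
    [InnerProductSpace ℝ E] [FiniteDimensional ℝ E]
    (C1 C2 : Set E) (hC1 : Convex ℝ C1) (hC2 : Convex ℝ C2)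
    (hC1ne : C1.Nonempty) (hC2ne : C2.Nonempty)
    (hcone : ∀ x ∈ C2, ∀ t : ℝ, 0 < t → t • x ∈ C2)
    (hdisj : C1 ∩ C2 = ∅) :
    ∃ v : E, v ≠ 0 ∧ (∀ x ∈ C1, 0 ≤ (inner ℝ v x : ℝ)) ∧
      (∀ x ∈ C2, (inner ℝ v x : ℝ) ≤ 0) := by
  obtain ⟨f, hf, hC1f, hC2f⟩ := exists_dual_separating_convex_cone hC1 hC2 hC1ne hC2ne hcone
    (Set.disjoint_iff_inter_eq_empty.2 hdisj)
  refine ⟨(InnerProductSpace.toDual ℝ E).symm f, by simpa using hf, ?_, ?_⟩ <;>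
    simpa only [InnerProductSpace.toDual_symm_apply]
end
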